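/- arXiv:2301.03000 — 2 statements merged into one kernel-verified Lean document; each statement's English description precedes it below -/
import Mathlib

section
/- Let $U$ be a random element of $SO(d+1)$ independent of a random element $X$ of $\mathbb{S}^d$, with $\mathbb{E}(D^l_{rs}(U)) = \tilde\phi^l_{rs}(f_U)$ where $\tilde\phi^l(f_U)$ is invertible. Then for the deconvolution kernel $K_T$, the hyperspherical unbiased scoring property holds: $\mathbb{E}(K_T(x, UX) \mid X) = K^*_T(x, X)$ almost surely, where $K^*_T(x, x^*) = \sum_{l=0}^{[T]}\sum_{q=1}^{N(d,l)} \overline{B^l_q(x^*)} B^l_q(x)$. -/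
/-!
Averaging the representation identity `conj (B^l_r(u x*)) = ∑_s D^l_{rs}(u) conj (B^l_s(x*))`
over `u ∼ μ` replaces the rotation matrix `D^l(u)` by its mean `φ̃^l(f_U)`; the kernel `K_T`
premultiplies by the inverse of that mean, so in expectation only `conj (B^l_q(x*))` survives.
-/

open MeasureTheory Finset

lemma sum_mul_sum_of_leftInverse {R : Type*} [CommSemiring R] {n : ℕ} {A φ : ℕ → ℕ → R}
    (hA : ∀ q s, q ∈ range n → s ∈ range n → ∑ r ∈ range n, A q r * φ r s = if q = s then 1 else 0)
    (c : ℕ → R) {q : ℕ} (hq : q ∈ range n) :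
    ∑ r ∈ range n, A q r * ∑ s ∈ range n, φ r s * c s = c q := by
  calc ∑ r ∈ range n, A q r * ∑ s ∈ range n, φ r s * c s
      = ∑ s ∈ range n, (∑ r ∈ range n, A q r * φ r s) * c s := by
        simp only [mul_sum, sum_mul, mul_assoc]
        exact sum_comm
    _ = ∑ s ∈ range n, (if q = s then 1 else 0) * c s :=
        sum_congr rfl fun s hs => by rw [hA q s hq hs]
    _ = c q := by simp [hq]

section Representation

variable {S G : Type*} [MeasurableSpace G] {μ : Measure G} {smul : G → S → S}
  {B : ℕ → S → ℂ} {D : ℕ → ℕ → G → ℂ} {n : ℕ}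

variable (smul B D n) in
def IsConjRotationMatrix : Prop :=
  ∀ r ∈ range n, ∀ u x, starRingEnd ℂ (B r (smul u x)) = ∑ s ∈ range n, D r s u * starRingEnd ℂ (B s x)

lemma integrable_conj_comp_smul
    (hD : IsConjRotationMatrix smul B D n)
    (hDint : ∀ r s, Integrable (D r s) μ) {r : ℕ} (hr : r ∈ range n) (x : S) :
    Integrable (fun u => starRingEnd ℂ (B r (smul u x))) μ := by
  simp_rw [hD r hr _ x]
  exact integrable_finsetSum _ fun s _ => (hDint r s).mul_const _

lemma integral_conj_comp_smul
    (hD : IsConjRotationMatrix smul B D n)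
    (hDint : ∀ r s, Integrable (D r s) μ) {r : ℕ} (hr : r ∈ range n) (x : S) :
    ∫ u, starRingEnd ℂ (B r (smul u x)) ∂μ
      = ∑ s ∈ range n, (∫ u, D r s u ∂μ) * starRingEnd ℂ (B s x) := by
  simp_rw [hD r hr _ x]
  rw [integral_finsetSum _ fun s _ => (hDint r s).mul_const _]
  simp_rw [integral_mul_const]

lemma integrable_sum_mul_conj_comp_smul
    (hD : IsConjRotationMatrix smul B D n)
    (hDint : ∀ r s, Integrable (D r s) μ) (A : ℕ → ℂ) (x : S) :
    Integrable (fun u => ∑ r ∈ range n, A r * starRingEnd ℂ (B r (smul u x))) μ :=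
  integrable_finsetSum _ fun _ hr => (integrable_conj_comp_smul hD hDint hr x).const_mul _

lemma integral_sum_mul_conj_comp_smul_of_leftInverse
    (hD : IsConjRotationMatrix smul B D n)
    (hDint : ∀ r s, Integrable (D r s) μ) {A : ℕ → ℕ → ℂ}
    (hA : ∀ q s, q ∈ range n → s ∈ range n →
      ∑ r ∈ range n, A q r * ∫ u, D r s u ∂μ = if q = s then 1 else 0)
    {q : ℕ} (hq : q ∈ range n) (x : S) :
    ∫ u, ∑ r ∈ range n, A q r * starRingEnd ℂ (B r (smul u x)) ∂μ = starRingEnd ℂ (B q x) := by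
  rw [integral_finsetSum _ fun r hr => (integrable_conj_comp_smul hD hDint hr x).const_mul _]
  calc ∑ r ∈ range n, ∫ u, A q r * starRingEnd ℂ (B r (smul u x)) ∂μ
      = ∑ r ∈ range n, A q r * ∑ s ∈ range n, (∫ u, D r s u ∂μ) * starRingEnd ℂ (B s x) :=
        sum_congr rfl fun r hr => by rw [integral_const_mul, integral_conj_comp_smul hD hDint hr]
    _ = starRingEnd ℂ (B q x) := sum_mul_sum_of_leftInverse hA _ hq

end Representation

/-- `∫ · ∂μ` is `𝔼(· | X = xstar)` for `U ∼ μ` independent of `X`; `phiU l` is the mean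
`φ̃^l(f_U)` of the rotation matrix `D^l(U)` and `Ainv l` its inverse. -/
theorem unbiased_scoring_general
    {S G : Type*} [MeasurableSpace G]
    (μ : Measure G)
    (smul : G → S → S)
    (Nd : ℕ → ℕ) (B : ℕ → ℕ → S → ℂ)
    (D : ℕ → ℕ → ℕ → G → ℂ) (phiU : ℕ → ℕ → ℕ → ℂ) (Ainv : ℕ → ℕ → ℕ → ℂ)
    (hD : ∀ (l r : ℕ), r ∈ Finset.range (Nd l) → ∀ (u : G) (x : S),
      (starRingEnd ℂ) (B l r (smul u x))
        = ∑ s ∈ Finset.range (Nd l), D l r s u * (starRingEnd ℂ) (B l s x))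
    (hDint : ∀ l r s : ℕ, Integrable (D l r s) μ)
    (hphiU : ∀ l r s : ℕ, ∫ u, D l r s u ∂μ = phiU l r s)
    (hAinv : ∀ l q s : ℕ, q ∈ Finset.range (Nd l) → s ∈ Finset.range (Nd l) →
      ∑ r ∈ Finset.range (Nd l), Ainv l q r * phiU l r s = if q = s then 1 else 0)
    (T : ℕ) (x xstar : S) :
    (∫ u, (∑ l ∈ Finset.range (T + 1), ∑ q ∈ Finset.range (Nd l),
        (∑ r ∈ Finset.range (Nd l),
          Ainv l q r * (starRingEnd ℂ) (B l r (smul u xstar))) * B l q x) ∂μ)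
      = ∑ l ∈ Finset.range (T + 1), ∑ q ∈ Finset.range (Nd l),
          (starRingEnd ℂ) (B l q xstar) * B l q x := by
  have hA : ∀ l q s, q ∈ range (Nd l) → s ∈ range (Nd l) →
      ∑ r ∈ range (Nd l), Ainv l q r * ∫ u, D l r s u ∂μ = if q = s then 1 else 0 := by
    simpa only [hphiU] using hAinv
  have hint : ∀ l q, Integrable (fun u =>
      (∑ r ∈ range (Nd l), Ainv l q r * starRingEnd ℂ (B l r (smul u xstar))) * B l q x) μ :=
    fun l q => (integrable_sum_mul_conj_comp_smul (hD l) (hDint l) (Ainv l q) xstar).mul_const _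
  rw [integral_finsetSum _ fun l _ => integrable_finsetSum _ fun q _ => hint l q]
  refine sum_congr rfl fun l _ => ?_
  rw [integral_finsetSum _ fun q _ => hint l q]
  refine sum_congr rfl fun q hq => ?_
  rw [integral_mul_const,
    integral_sum_mul_conj_comp_smul_of_leftInverse (hD l) (hDint l) (hA l) hq]

/-- Hyperspherical unbiased scoring property: with `U ∼ μ` independent of `X`, for every
value `xstar` of `X`, `E(K_T(x, U·xstar)) = K*_T(x, xstar)`, i.e.
`∫ K_T(x, u • xstar) dμ(u) = ∑_{l ≤ T} ∑_q conj(B^l_q xstar) B^l_q x`.  Here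
`D l r s u` are the rotation matrix entries with `conj(B^l_r(u x)) = ∑_s D^l_{rs}(u) conj(B^l_s x)`,
`phiU l r s = ∫ D^l_{rs}(u) dμ(u)` is the rotational Fourier transform of `f_U`, and
`Ainv` is its matrix inverse. -/
theorem unbiased_scoring
    {S G : Type*} [MeasurableSpace G]
    (μ : Measure G) [IsProbabilityMeasure μ]
    (smul : G → S → S)
    (Nd : ℕ → ℕ) (B : ℕ → ℕ → S → ℂ)
    (D : ℕ → ℕ → ℕ → G → ℂ) (phiU : ℕ → ℕ → ℕ → ℂ) (Ainv : ℕ → ℕ → ℕ → ℂ)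
    (hD : ∀ (l r : ℕ), r ∈ Finset.range (Nd l) → ∀ (u : G) (x : S),
      (starRingEnd ℂ) (B l r (smul u x))
        = ∑ s ∈ Finset.range (Nd l), D l r s u * (starRingEnd ℂ) (B l s x))
    (hDint : ∀ l r s : ℕ, Integrable (D l r s) μ)
    (hphiU : ∀ l r s : ℕ, ∫ u, D l r s u ∂μ = phiU l r s)
    (hAinv : ∀ l q s : ℕ, q ∈ Finset.range (Nd l) → s ∈ Finset.range (Nd l) →
      ∑ r ∈ Finset.range (Nd l), Ainv l q r * phiU l r s = if q = s then 1 else 0)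
    (T : ℕ) (x xstar : S) :
    (∫ u, (∑ l ∈ Finset.range (T + 1), ∑ q ∈ Finset.range (Nd l),
        (∑ r ∈ Finset.range (Nd l),
          Ainv l q r * (starRingEnd ℂ) (B l r (smul u xstar))) * B l q x) ∂μ)
      = ∑ l ∈ Finset.range (T + 1), ∑ q ∈ Finset.range (Nd l),
          (starRingEnd ℂ) (B l q xstar) * B l q x :=
  unbiased_scoring_general μ smul Nd B D phiU Ainv hD hDint hphiU hAinv T x xstar
end

section
/- Suppose there exists $c > 0$ such that $\|(\tilde\phi^l(f_U))^{-1}\|_{op} \le c\, \sigma_{\min}((\tilde\phi^l(f_U))^{-1})$ for all $l \ge 0$, where $\sigma_{\min}$ denotes the minimum singular value. Then $\int_{\mathbb{S}^d} |K_T(x,z)|^2 d\nu(z) \ge c^{-2} (\nu(\mathbb{S}^d))^{-1} \sum_{l=0}^{[T]} N(d,l)\, \|(\tilde\phi^l(f_U))^{-1}\|_{op}^2$ for every $x \in \mathbb{S}^d$. -/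
/-!
With `C_{l,r} = ∑_q B^l_q(x) (φ̃^l)⁻¹_{qr}` the kernel is `K_T(x, ·) = ∑_{l,r} C_{l,r} conj B^l_r`,
so orthonormality of the spherical harmonics gives `∫ |K_T(x,z)|² dν(z) = ∑_{l,r} |C_{l,r}|²`.
For fixed `l`, `C_{l,·}` is the transpose of `(φ̃^l)⁻¹` applied to `B^l(x)`, so its squared norm is
at least `σ_min² ‖B^l(x)‖² = σ_min² N(d,l) / ν(𝕊^d)`, and condition (C) bounds `σ_min²` below by
`c⁻² ‖(φ̃^l)⁻¹‖_op²`.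
-/

open MeasureTheory ComplexConjugate

lemma inv_sq_mul_sq_le_sq {a b c : ℝ} (ha : 0 ≤ a) (h : a ≤ c * b) :
    c⁻¹ ^ 2 * a ^ 2 ≤ b ^ 2 := by
  rcases eq_or_ne c 0 with rfl | hc
  · simpa using sq_nonneg b
  calc c⁻¹ ^ 2 * a ^ 2 ≤ c⁻¹ ^ 2 * (c * b) ^ 2 := by gcongr
    _ = b ^ 2 := by field_simp

lemma norm_sq_sum_mul_conj {ι : Type*} (s : Finset ι) (C e : ι → ℂ) :
    ‖∑ i ∈ s, C i * conj (e i)‖ ^ 2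
      = (∑ i ∈ s, ∑ j ∈ s, C i * conj (C j) * (conj (e i) * e j)).re := by
  rw [← Complex.ofReal_re (_ ^ 2), Complex.ofReal_pow, ← Complex.mul_conj', map_sum,
    Finset.sum_mul_sum]
  simp only [map_mul, Complex.conj_conj, mul_mul_mul_comm, mul_comm (conj (e _))]

/-- Parseval's identity for a finite family that is orthonormal in `L²(ν)`. -/
theorem integral_norm_sq_sum_mul_conj {ι S : Type*} [MeasurableSpace S] {ν : Measure S}
    [DecidableEq ι] (s : Finset ι) (e : S → ι → ℂ) (C : ι → ℂ)
    (horth : ∀ i ∈ s, ∀ j ∈ s, ∫ z, conj (e z i) * e z j ∂ν = if i = j then 1 else 0)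
    (hint : ∀ i ∈ s, ∀ j ∈ s, Integrable (fun z => conj (e z i) * e z j) ν) :
    ∫ z, ‖∑ i ∈ s, C i * conj (e z i)‖ ^ 2 ∂ν = ∑ i ∈ s, ‖C i‖ ^ 2 := by
  have hterm : ∀ i ∈ s, ∀ j ∈ s,
      Integrable (fun z => C i * conj (C j) * (conj (e z i) * e z j)) ν :=
    fun i hi j hj => (hint i hi j hj).const_mul _
  have hrow : ∀ i ∈ s,
      Integrable (fun z => ∑ j ∈ s, C i * conj (C j) * (conj (e z i) * e z j)) ν :=
    fun i hi => integrable_finsetSum _ (hterm i hi)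
  calc ∫ z, ‖∑ i ∈ s, C i * conj (e z i)‖ ^ 2 ∂ν
      = (∫ z, ∑ i ∈ s, ∑ j ∈ s, C i * conj (C j) * (conj (e z i) * e z j) ∂ν).re := by
        simp_rw [norm_sq_sum_mul_conj]
        exact integral_re (integrable_finsetSum _ hrow)
    _ = (∑ i ∈ s, ∑ j ∈ s, C i * conj (C j) * ∫ z, conj (e z i) * e z j ∂ν).re := by
        rw [integral_finsetSum _ hrow]
        congr 1
        refine Finset.sum_congr rfl fun i hi => ?_
        rw [integral_finsetSum _ (hterm i hi)]
        exact Finset.sum_congr rfl fun j _ => integral_const_mul _ _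
    _ = ∑ i ∈ s, ‖C i‖ ^ 2 := by
        rw [Complex.re_sum]
        refine Finset.sum_congr rfl fun i hi => ?_
        rw [Finset.sum_congr rfl fun j hj => by rw [horth i hi j hj]]
        simp [hi, Complex.mul_conj', ← Complex.ofReal_pow]

theorem kernel_L2_lower_bound_general
    {S : Type*} [MeasurableSpace S] (ν : Measure S)
    (Nd : ℕ → ℕ) (B : ℕ → ℕ → S → ℂ) (Ainv : ℕ → ℕ → ℕ → ℂ)
    (a σmin : ℕ → ℝ) (ha : ∀ l, 0 ≤ a l)
    (c : ℝ)
    (hC : ∀ l : ℕ, a l ≤ c * σmin l)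
    (hσ : ∀ (l : ℕ) (v : ℕ → ℂ),
      σmin l ^ 2 * ∑ q ∈ Finset.range (Nd l), ‖v q‖ ^ 2
        ≤ ∑ r ∈ Finset.range (Nd l), ‖∑ q ∈ Finset.range (Nd l), v q * Ainv l q r‖ ^ 2)
    (horth : ∀ l q l' q' : ℕ, q ∈ Finset.range (Nd l) → q' ∈ Finset.range (Nd l') →
      ∫ z, (starRingEnd ℂ) (B l q z) * B l' q' z ∂ν = if l = l' ∧ q = q' then 1 else 0)
    (hint : ∀ l q l' q' : ℕ,
      Integrable (fun z => (starRingEnd ℂ) (B l q z) * B l' q' z) ν)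
    (hadd : ∀ (l : ℕ) (y : S),
      ∑ q ∈ Finset.range (Nd l), ‖B l q y‖ ^ 2 = (Nd l : ℝ) / (ν Set.univ).toReal)
    (T : ℕ) (x : S) :
    c⁻¹ ^ 2 * ((ν Set.univ).toReal)⁻¹
        * ∑ l ∈ Finset.range (T + 1), (Nd l : ℝ) * a l ^ 2
      ≤ ∫ z, ‖∑ l ∈ Finset.range (T + 1), ∑ q ∈ Finset.range (Nd l),
          ∑ r ∈ Finset.range (Nd l),
            B l q x * Ainv l q r * (starRingEnd ℂ) (B l r z)‖ ^ 2 ∂ν := by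
  classical
  set s := (Finset.range (T + 1)).sigma fun l => Finset.range (Nd l)
  have hK : ∀ z, ∑ l ∈ Finset.range (T + 1), ∑ q ∈ Finset.range (Nd l),
      ∑ r ∈ Finset.range (Nd l), B l q x * Ainv l q r * conj (B l r z)
        = ∑ p ∈ s,
            (∑ q ∈ Finset.range (Nd p.1), B p.1 q x * Ainv p.1 q p.2) * conj (B p.1 p.2 z) := by
    intro z
    rw [Finset.sum_sigma]
    refine Finset.sum_congr rfl fun l _ => ?_
    rw [Finset.sum_comm]
    simp only [Finset.sum_mul]
  have horth_sigma : ∀ p ∈ s, ∀ p' ∈ s, ∫ z, conj (B p.1 p.2 z) * B p'.1 p'.2 z ∂ν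
      = if p = p' then 1 else 0 := by
    intro p hp p' hp'
    rw [horth _ _ _ _ (Finset.mem_sigma.1 hp).2 (Finset.mem_sigma.1 hp').2]
    simp only [Sigma.ext_iff, heq_iff_eq]
  simp only [hK]
  rw [integral_norm_sq_sum_mul_conj s (fun z p => B p.1 p.2 z) _ horth_sigma
    (fun p _ p' _ => hint p.1 p.2 p'.1 p'.2), Finset.sum_sigma, Finset.mul_sum]
  gcongr with l
  calc c⁻¹ ^ 2 * ((ν Set.univ).toReal)⁻¹ * ((Nd l : ℝ) * a l ^ 2)
      = c⁻¹ ^ 2 * a l ^ 2 * ((Nd l : ℝ) / (ν Set.univ).toReal) := by ring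
    _ ≤ σmin l ^ 2 * ((Nd l : ℝ) / (ν Set.univ).toReal) := by
        gcongr
        exact inv_sq_mul_sq_le_sq (ha l) (hC l)
    _ ≤ _ := hadd l x ▸ hσ l (fun q => B l q x)

/-- Lower bound for the integrated squared deconvolution kernel: if
`‖(φ̃^l(f_U))⁻¹‖_op ≤ c σ_min((φ̃^l(f_U))⁻¹)` for all `l` (condition (C)), then
`∫ |K_T(x,z)|² dν(z) ≥ c⁻² ν(𝕊^d)⁻¹ ∑_{l ≤ T} N(d,l) ‖(φ̃^l(f_U))⁻¹‖_op²` for every `x`.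
Here `a l` is the operator norm and `σmin l` the minimum singular value of
`(φ̃^l(f_U))⁻¹`, encoded via `hσ : ‖Aᵀv‖ ≥ σ_min(A)‖v‖`; `hadd` is the addition theorem
and `horth` orthonormality of the spherical harmonic basis. -/
theorem kernel_L2_lower_bound
    {S : Type*} [MeasurableSpace S] (ν : Measure S) [IsFiniteMeasure ν]
    (Nd : ℕ → ℕ) (B : ℕ → ℕ → S → ℂ) (Ainv : ℕ → ℕ → ℕ → ℂ)
    (a σmin : ℕ → ℝ) (ha : ∀ l, 0 ≤ a l) (hσ0 : ∀ l, 0 ≤ σmin l)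
    (c : ℝ) (hc : 0 < c)
    (hC : ∀ l : ℕ, a l ≤ c * σmin l)
    (hσ : ∀ (l : ℕ) (v : ℕ → ℂ),
      σmin l ^ 2 * ∑ q ∈ Finset.range (Nd l), ‖v q‖ ^ 2
        ≤ ∑ r ∈ Finset.range (Nd l), ‖∑ q ∈ Finset.range (Nd l), v q * Ainv l q r‖ ^ 2)
    (horth : ∀ l q l' q' : ℕ, q ∈ Finset.range (Nd l) → q' ∈ Finset.range (Nd l') →
      ∫ z, (starRingEnd ℂ) (B l q z) * B l' q' z ∂ν = if l = l' ∧ q = q' then 1 else 0)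
    (hint : ∀ l q l' q' : ℕ,
      Integrable (fun z => (starRingEnd ℂ) (B l q z) * B l' q' z) ν)
    (hadd : ∀ (l : ℕ) (y : S),
      ∑ q ∈ Finset.range (Nd l), ‖B l q y‖ ^ 2 = (Nd l : ℝ) / (ν Set.univ).toReal)
    (T : ℕ) (x : S) :
    c⁻¹ ^ 2 * ((ν Set.univ).toReal)⁻¹
        * ∑ l ∈ Finset.range (T + 1), (Nd l : ℝ) * a l ^ 2
      ≤ ∫ z, ‖∑ l ∈ Finset.range (T + 1), ∑ q ∈ Finset.range (Nd l),
          ∑ r ∈ Finset.range (Nd l),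
            B l q x * Ainv l q r * (starRingEnd ℂ) (B l r z)‖ ^ 2 ∂ν :=
  kernel_L2_lower_bound_general ν Nd B Ainv a σmin ha c hC hσ horth hint hadd T x
end
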